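/- Let G = ⟨a, b | a²b⁻²ab⁻²a²ba²baba²b = 1⟩ with a left-ordering ≺, μ = b⁻²ab⁻²ab⁻¹, λ = a⁻²b⁻¹a⁻²b. Then the case a ≺ 1 ≺ b together with μ⁻¹λ ≺ 1 is impossible. -/

import Mathlib

/-!
In `G`, `μ⁻¹λ = y a⁻¹ y² x⁻¹` (the two sides differ by a conjugate of the relator) and
`λ = y⁻² b²`.
With `a ≺ 1 ≺ b`, both `x = b⁻²a` and `μ = b⁻²ab⁻²ab⁻¹` are products of negative elements,
so `x ≺ 1` and `μ ≺ 1`. If `1 ⪯ y`, the identity would make `μ⁻¹λ` a product of non-negative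
elements with a positive factor `a⁻¹`, against `μ⁻¹λ ≺ 1`; hence `y ≺ 1`. Then `λ = y⁻² b²` is
positive, while `μ⁻¹λ ≺ 1` gives `λ ≺ μ ≺ 1`.
-/

/-- The single relator `a²b⁻²ab⁻²a²ba²baba²b` of the presentation of `π₁(v2503)`,
with `a`, `b` the generators of the free group on two letters. -/
def rel2503 : FreeGroup (Fin 2) :=
  let a : FreeGroup (Fin 2) := FreeGroup.of 0
  let b : FreeGroup (Fin 2) := FreeGroup.of 1
  a ^ 2 * b⁻¹ ^ 2 * a * b⁻¹ ^ 2 * a ^ 2 * b * a ^ 2 * b * a * b * a ^ 2 * b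

/-- The fundamental group of `v2503`: `⟨a, b | a²b⁻²ab⁻²a²ba²baba²b = 1⟩`. -/
abbrev G2503 : Type := PresentedGroup ({rel2503} : Set (FreeGroup (Fin 2)))

/-- The generator `a`. -/
def ga : G2503 := PresentedGroup.of 0
/-- The generator `b`. -/
def gb : G2503 := PresentedGroup.of 1

/-- `x = b⁻²a`. -/
def gx : G2503 := gb⁻¹ ^ 2 * ga
/-- `y = ba²`. -/
def gy : G2503 := gb * ga ^ 2
/-- The homological meridian `μ = b⁻²ab⁻²ab⁻¹`. -/
def gmu : G2503 := gb⁻¹ ^ 2 * ga * gb⁻¹ ^ 2 * ga * gb⁻¹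
/-- The homological longitude `λ = a⁻²b⁻¹a⁻²b`. -/
def glam : G2503 := ga⁻¹ ^ 2 * gb⁻¹ * ga⁻¹ ^ 2 * gb

theorem rel2503_eq_one :
    ga ^ 2 * gb⁻¹ ^ 2 * ga * gb⁻¹ ^ 2 * ga ^ 2 * gb * ga ^ 2 * gb * ga * gb * ga ^ 2 * gb = 1 :=
  PresentedGroup.one_of_mem (Set.mem_singleton rel2503)

theorem gmu_inv_mul_glam : gmu⁻¹ * glam = gy * ga⁻¹ * gy ^ 2 * gx⁻¹ := by
  have hconj : gy * ga⁻¹ * gy ^ 2 * gx⁻¹ * (gmu⁻¹ * glam)⁻¹ =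
      (gb * ga * gb * ga ^ 2 * gb * ga * gb * ga ^ 2 * gb) *
        (ga ^ 2 * gb⁻¹ ^ 2 * ga * gb⁻¹ ^ 2 * ga ^ 2 * gb * ga ^ 2 * gb * ga * gb * ga ^ 2 * gb) *
        (gb * ga * gb * ga ^ 2 * gb * ga * gb * ga ^ 2 * gb)⁻¹ := by
    simp only [gmu, glam, gx, gy, sq (gb * ga ^ 2)]
    group
  rw [rel2503_eq_one, mul_one, mul_inv_cancel, mul_inv_eq_one] at hconj
  exact hconj.symm

theorem glam_eq : glam = gy⁻¹ ^ 2 * gb ^ 2 := by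
  simp only [glam, gy, sq]
  group

section LeftOrdered

variable [LinearOrder G2503] [MulLeftStrictMono G2503]

attribute [local instance] mulLeftMono_of_mulLeftStrictMono

theorem gx_lt_one (ha : ga < 1) (hb : 1 < gb) : gx < 1 :=
  Left.mul_lt_one (pow_lt_one' (Left.inv_lt_one_iff.mpr hb) two_ne_zero) ha

theorem gmu_lt_one (ha : ga < 1) (hb : 1 < gb) : gmu < 1 := by
  have hb' : gb⁻¹ < 1 := Left.inv_lt_one_iff.mpr hb
  have hb2 : gb⁻¹ ^ 2 < 1 := pow_lt_one' hb' two_ne_zero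
  exact Left.mul_lt_one (Left.mul_lt_one (Left.mul_lt_one (Left.mul_lt_one hb2 ha) hb2) ha) hb'

theorem gy_lt_one (ha : ga < 1) (hb : 1 < gb) (h : gmu⁻¹ * glam < 1) : gy < 1 := by
  by_contra! hy
  have hpos : 1 < gy * ga⁻¹ * gy ^ 2 * gx⁻¹ :=
    Left.one_lt_mul_of_le_of_lt
      (Left.one_le_mul (Left.one_le_mul hy (Left.one_lt_inv_iff.mpr ha).le)
        (one_le_pow_of_one_le' hy 2))
      (Left.one_lt_inv_iff.mpr (gx_lt_one ha hb))
  rw [← gmu_inv_mul_glam] at hpos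
  exact hpos.not_gt h

theorem one_lt_glam (hy : gy < 1) (hb : 1 < gb) : 1 < glam := by
  rw [glam_eq]
  exact Left.one_lt_mul (one_lt_pow' (Left.one_lt_inv_iff.mpr hy) two_ne_zero)
    (one_lt_pow' hb two_ne_zero)

end LeftOrdered

/-- Given a left-ordering of `π₁(v2503)`, the case `a ≺ 1 ≺ b` together with
`μ⁻¹λ ≺ 1` is impossible. -/
theorem case_IV_impossible [LinearOrder G2503] [CovariantClass G2503 G2503 (· * ·) (· < ·)]
    (ha : ga < 1) (hb : 1 < gb) (h : gmu⁻¹ * glam < 1) : False :=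
  have hlam_lt_gmu : glam < gmu := inv_mul_lt_one_iff.mp h
  ((one_lt_glam (gy_lt_one ha hb h) hb).trans hlam_lt_gmu).not_gt (gmu_lt_one ha hb)
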